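/- Let R_T ∈ ℂ^{N_T×N_T} be Hermitian positive semidefinite with positive semidefinite square root R_T^{1/2}, let F ∈ ℂ^{N_T×K}, and set T = R_T^{1/2} F F^H R_T^{1/2}. Let λ_1,…,λ_{N_R} ≥ 0 and let N_S be a positive integer with N_S ≥ K. For each j with λ_j > 0, let δ_j ≥ 0 satisfy the fixed-point equation δ_j = (1/N_S)·tr(T·(I_{N_T} + (λ_j/(1+λ_j δ_j))·T)^{-1}) (for λ_j = 0 set δ_j arbitrarily; the corresponding terms vanish). Then Σ_{j=1}^{N_R} ρ̄(λ_j, T, N_S, δ_j) ≥ ((N_S − min{K, rank(F F^H)})/N_S) · Σ_{j=1}^{N_R} log det(I_{N_T} + λ_j·T), where ρ̄(λ,T,N_S,δ) = log det(I_{N_T} + (λ/(1+λδ))T) + N_S·log(1+λδ) − N_S·λδ/(1+λδ). -/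

import Mathlib

/-!
The inequality holds term by term in `j`. Diagonalizing `T = U diag(t) Uᴴ` turns every quantity
into a function of the eigenvalues `t i ≥ 0`. Fix `λ = λ_j > 0`, put `u = 1 + λδ` and
`L = ∑ log (1 + λ t i)`. Since `1 + (λ/u) t = (u + λ t)/u`, passing from `λ` to `λ/u` loses at most
`log u` per nonzero eigenvalue, i.e. at most `rank T · log u` in total. The fixed-point equation reads
`N_S (1 - 1/u) = ∑ λ t i / (u + λ t i)`, which is at most `L` because `x/(u+x) ≤ 1 - 1/(1+x) ≤ log (1+x)`.
With `1 - 1/u ≤ log u` this gives `ρ̄ ≥ L - rank T · (1 - 1/u) ≥ (1 - rank T / N_S) L`, and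
`rank T ≤ min K (rank (F Fᴴ))`.
-/

open Matrix
open scoped ComplexOrder

/-- The fixed-point equation `δ = (1/N_S)·tr(T·(I + (ρ/(1+ρδ))·T)⁻¹)`. -/
def FixedPointEq {n : ℕ} (T : Matrix (Fin n) (Fin n) ℂ) (ρ : ℝ) (NS : ℕ) (δ : ℝ) : Prop :=
  (δ : ℂ) = (NS : ℂ)⁻¹ * (T * (1 + ((ρ / (1 + ρ * δ) : ℝ) : ℂ) • T)⁻¹).trace

/-- `ρ̄(λ,T,N_S,δ)`, the closed-form per-eigenvalue sensing mutual information (eq. (7)). -/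
noncomputable def rhoBar {n : ℕ} (lam : ℝ) (T : Matrix (Fin n) (Fin n) ℂ)
    (NS : ℕ) (δ : ℝ) : ℝ :=
  Real.log ((1 + ((lam / (1 + lam * δ) : ℝ) : ℂ) • T).det.re)
    + (NS : ℝ) * Real.log (1 + lam * δ) - (NS : ℝ) * (lam * δ / (1 + lam * δ))

namespace Matrix.IsHermitian

variable {n 𝕜 : Type*} [Fintype n] [DecidableEq n] [RCLike 𝕜] {A : Matrix n n 𝕜}

theorem det_cfc (hA : A.IsHermitian) (f : ℝ → ℝ) :
    (cfc f A).det = ∏ i, (f (hA.eigenvalues i) : 𝕜) := by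
  rw [cfc_eq hA, IsHermitian.cfc, Unitary.conjStarAlgAut_apply, det_mul, det_mul, mul_right_comm,
    ← det_mul, Unitary.mul_star_self_of_mem hA.eigenvectorUnitary.2, det_one, one_mul,
    det_diagonal]
  rfl

theorem trace_cfc (hA : A.IsHermitian) (f : ℝ → ℝ) :
    (cfc f A).trace = ∑ i, (f (hA.eigenvalues i) : 𝕜) := by
  rw [cfc_eq hA, IsHermitian.cfc, Unitary.conjStarAlgAut_apply, trace_mul_cycle,
    Unitary.star_mul_self_of_mem hA.eigenvectorUnitary.2, one_mul, trace_diagonal]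
  rfl

theorem one_add_smul_eq_cfc (hA : A.IsHermitian) (c : ℝ) :
    1 + (c : 𝕜) • A = cfc (fun x ↦ 1 + c * x) A := by
  have hA' : IsSelfAdjoint A := hA
  rw [cfc_const_add 1 (fun x ↦ c * x) A, cfc_const_mul c (fun x ↦ x) A, cfc_id' ℝ A,
    Algebra.algebraMap_eq_smul_one, one_smul, RCLike.real_smul_eq_coe_smul (K := 𝕜)]

theorem det_one_add_smul (hA : A.IsHermitian) (c : ℝ) :
    (1 + (c : 𝕜) • A).det = ∏ i, ((1 + c * hA.eigenvalues i : ℝ) : 𝕜) := by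
  rw [hA.one_add_smul_eq_cfc, hA.det_cfc]

end Matrix.IsHermitian

namespace Matrix.PosSemidef

variable {n 𝕜 : Type*} [Fintype n] [DecidableEq n] [RCLike 𝕜] {A : Matrix n n 𝕜}

theorem mul_inv_one_add_smul_eq_cfc (hA : A.PosSemidef) {c : ℝ} (hc : 0 ≤ c) :
    A * (1 + (c : 𝕜) • A)⁻¹ = cfc (fun x ↦ x / (1 + c * x)) A := by
  have hA' : IsSelfAdjoint A := hA.isHermitian
  rw [cfc_map_div _ _ A ?_, cfc_id' ℝ A, ← hA.isHermitian.one_add_smul_eq_cfc,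
    nonsing_inv_eq_ringInverse]
  rintro x hx
  obtain ⟨i, rfl⟩ := hA.isHermitian.spectrum_real_eq_range_eigenvalues ▸ hx
  have := hA.eigenvalues_nonneg i
  positivity

theorem trace_mul_inv_one_add_smul (hA : A.PosSemidef) {c : ℝ} (hc : 0 ≤ c) :
    (A * (1 + (c : 𝕜) • A)⁻¹).trace =
      ∑ i, ((hA.isHermitian.eigenvalues i / (1 + c * hA.isHermitian.eigenvalues i) : ℝ) : 𝕜) := by
  rw [hA.mul_inv_one_add_smul_eq_cfc hc, hA.isHermitian.trace_cfc]

theorem log_re_det_one_add_smul (hA : A.PosSemidef) {c : ℝ} (hc : 0 ≤ c) :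
    Real.log (RCLike.re (1 + (c : 𝕜) • A).det) =
      ∑ i, Real.log (1 + c * hA.isHermitian.eigenvalues i) := by
  rw [hA.isHermitian.det_one_add_smul, ← RCLike.ofReal_prod, RCLike.ofReal_re,
    Real.log_prod fun i _ ↦ ?_]
  have := hA.eigenvalues_nonneg i
  positivity

end Matrix.PosSemidef

theorem div_add_le_log_one_add {x u : ℝ} (hx : 0 ≤ x) (hu : 1 ≤ u) :
    x / (u + x) ≤ Real.log (1 + x) :=
  calc x / (u + x) ≤ x / (1 + x) := div_le_div_of_nonneg_left hx (by positivity) (by linarith)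
    _ = 1 - (1 + x)⁻¹ := by field_simp; ring
    _ ≤ Real.log (1 + x) := Real.one_sub_inv_le_log_of_pos (by positivity)

section Scalar

variable {ι : Type*} [Fintype ι] {t : ι → ℝ}

theorem sum_log_one_add_sub_card_mul_log_le (ht : ∀ i, 0 ≤ t i) {a u : ℝ} (ha : 0 ≤ a)
    (hu : 1 ≤ u) :
    ∑ i, Real.log (1 + a * t i) - Fintype.card {i // t i ≠ 0} * Real.log u ≤
      ∑ i, Real.log (1 + a / u * t i) := by
  have hcard : (Fintype.card {i // t i ≠ 0} : ℝ) * Real.log u =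
      ∑ i, if t i = 0 then 0 else Real.log u := by
    rw [Fintype.card_subtype, Finset.sum_ite, Finset.sum_const_zero, zero_add,
      Finset.sum_const, nsmul_eq_mul]
  rw [hcard, ← Finset.sum_sub_distrib]
  refine Finset.sum_le_sum fun i _ ↦ ?_
  split_ifs with hti
  · simp [hti]
  have hu0 : 0 < u := by linarith
  have hat : 0 ≤ a * t i := mul_nonneg ha (ht i)
  rw [show 1 + a / u * t i = (u + a * t i) / u by field_simp,
    Real.log_div (by positivity) hu0.ne']
  gcongr

theorem nat_mul_div_le_sum_log_of_fixedPoint (ht : ∀ i, 0 ≤ t i) {NS : ℕ} {a δ : ℝ}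
    (ha : 0 ≤ a) (hδ : 0 ≤ δ)
    (hfp : NS * δ = ∑ i, t i / (1 + a / (1 + a * δ) * t i)) :
    NS * (a * δ / (1 + a * δ)) ≤ ∑ i, Real.log (1 + a * t i) := by
  set u := 1 + a * δ
  have hu : 1 ≤ u := le_add_of_nonneg_right (mul_nonneg ha hδ)
  calc (NS : ℝ) * (a * δ / u) = a / u * (NS * δ) := by ring
    _ = ∑ i, a * t i / (u + a * t i) := by
      rw [hfp, Finset.mul_sum]
      refine Finset.sum_congr rfl fun i _ ↦ ?_
      have := ht i
      field_simp
    _ ≤ ∑ i, Real.log (1 + a * t i) :=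
      Finset.sum_le_sum fun i _ ↦ div_add_le_log_one_add (mul_nonneg ha (ht i)) hu

theorem sub_div_mul_sum_log_le_of_fixedPoint (ht : ∀ i, 0 ≤ t i) {m NS : ℕ}
    (hr : Fintype.card {i // t i ≠ 0} ≤ m) (hm : m ≤ NS) (hNS : 0 < NS) {a δ : ℝ}
    (ha : 0 ≤ a) (hδ : 0 ≤ δ)
    (hfp : NS * δ = ∑ i, t i / (1 + a / (1 + a * δ) * t i)) :
    (((NS : ℝ) - m) / NS) * ∑ i, Real.log (1 + a * t i) ≤
      ∑ i, Real.log (1 + a / (1 + a * δ) * t i) + NS * Real.log (1 + a * δ)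
        - NS * (a * δ / (1 + a * δ)) := by
  have hu : 1 ≤ 1 + a * δ := le_add_of_nonneg_right (mul_nonneg ha hδ)
  have hrescale := sum_log_one_add_sub_card_mul_log_le ht ha hu
  have hfixed := nat_mul_div_le_sum_log_of_fixedPoint ht ha hδ hfp
  have hq : a * δ / (1 + a * δ) ≤ Real.log (1 + a * δ) := by
    have := Real.one_sub_inv_le_log_of_pos (zero_lt_one.trans_le hu)
    rwa [show 1 - (1 + a * δ)⁻¹ = a * δ / (1 + a * δ) by field_simp; ring] at this
  have hq0 : 0 ≤ a * δ / (1 + a * δ) := by positivity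
  have hL : 0 ≤ ∑ i, Real.log (1 + a * t i) := Finset.sum_nonneg fun i _ ↦
    Real.log_nonneg (le_add_of_nonneg_right (mul_nonneg ha (ht i)))
  have hrm : (Fintype.card {i // t i ≠ 0} : ℝ) ≤ m := by exact_mod_cast hr
  have hmNS : (m : ℝ) ≤ NS := by exact_mod_cast hm
  have hNS' : (0 : ℝ) < NS := by exact_mod_cast hNS
  have hlog_ge : (NS - Fintype.card {i // t i ≠ 0}) * (a * δ / (1 + a * δ)) ≤
      (NS - Fintype.card {i // t i ≠ 0}) * Real.log (1 + a * δ) :=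
    mul_le_mul_of_nonneg_left hq (by linarith)
  have hcard : Fintype.card {i // t i ≠ 0} * (a * δ / (1 + a * δ)) ≤
      m / NS * ∑ i, Real.log (1 + a * t i) :=
    calc Fintype.card {i // t i ≠ 0} * (a * δ / (1 + a * δ))
        ≤ m * (a * δ / (1 + a * δ)) := mul_le_mul_of_nonneg_right hrm hq0
      _ = m / NS * (NS * (a * δ / (1 + a * δ))) := by field_simp
      _ ≤ m / NS * ∑ i, Real.log (1 + a * t i) := by gcongr
  rw [sub_div, div_self hNS'.ne', sub_mul, one_mul]
  linarith

end Scalar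

theorem FixedPointEq.nat_mul_eq_sum {n : ℕ} {T : Matrix (Fin n) (Fin n) ℂ} (hT : T.PosSemidef)
    {ρ δ : ℝ} {NS : ℕ} (h : FixedPointEq T ρ NS δ) (hNS : NS ≠ 0) (hc : 0 ≤ ρ / (1 + ρ * δ)) :
    NS * δ = ∑ i, hT.isHermitian.eigenvalues i /
      (1 + ρ / (1 + ρ * δ) * hT.isHermitian.eigenvalues i) := by
  have htrace := hT.trace_mul_inv_one_add_smul (𝕜 := ℂ) hc
  simp only [RCLike.ofReal_eq_complex_ofReal] at htrace
  rw [FixedPointEq, htrace, inv_mul_eq_div, eq_div_iff (Nat.cast_ne_zero.mpr hNS)] at h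
  exact_mod_cast (mul_comm _ _).trans h

theorem le_rhoBar {n : ℕ} {T : Matrix (Fin n) (Fin n) ℂ} (hT : T.PosSemidef) {m NS : ℕ}
    (hr : T.rank ≤ m) (hm : m ≤ NS) (hNS : 0 < NS) {lam δ : ℝ} (hlam : 0 ≤ lam)
    (hδ : 0 < lam → 0 ≤ δ ∧ FixedPointEq T lam NS δ) :
    (((NS : ℝ) - m) / NS) * Real.log (1 + (lam : ℂ) • T).det.re ≤ rhoBar lam T NS δ := by
  obtain rfl | hlam := hlam.eq_or_lt
  · simp [rhoBar]
  obtain ⟨hδ, hfp⟩ := hδ hlam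
  have hc : 0 ≤ lam / (1 + lam * δ) := by positivity
  have hlog := hT.log_re_det_one_add_smul (𝕜 := ℂ) hlam.le
  have hlog' := hT.log_re_det_one_add_smul (𝕜 := ℂ) hc
  simp only [RCLike.ofReal_eq_complex_ofReal, RCLike.re_eq_complex_re] at hlog hlog'
  unfold rhoBar
  rw [hlog, hlog']
  exact sub_div_mul_sum_log_le_of_fixedPoint hT.eigenvalues_nonneg
    (hT.isHermitian.rank_eq_card_non_zero_eigs ▸ hr) hm hNS hlam.le hδ
    (hfp.nat_mul_eq_sum hT hNS.ne' hc)

theorem smi_lower_bound_general {NT K NR NS : ℕ}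
    (Rhalf : Matrix (Fin NT) (Fin NT) ℂ)
    (hRhalf : Rhalf.PosSemidef)
    (F : Matrix (Fin NT) (Fin K) ℂ)
    (l : Fin NR → ℝ) (hl : ∀ j, 0 ≤ l j)
    (hNS1 : 1 ≤ NS) (hNSK : K ≤ NS)
    (δ : Fin NR → ℝ)
    (hδ : ∀ j, 0 < l j →
      0 ≤ δ j ∧ FixedPointEq (Rhalf * F * Fᴴ * Rhalf) (l j) NS (δ j)) :
    ∑ j : Fin NR, rhoBar (l j) (Rhalf * F * Fᴴ * Rhalf) NS (δ j) ≥
      (((NS : ℝ) - (min K (F * Fᴴ).rank : ℕ)) / (NS : ℝ)) *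
        ∑ j : Fin NR,
          Real.log ((1 + ((l j : ℝ) : ℂ) • (Rhalf * F * Fᴴ * Rhalf)).det.re) := by
  have hassoc : Rhalf * F * Fᴴ * Rhalf = Rhalf * (F * Fᴴ) * Rhalf := by
    simp only [Matrix.mul_assoc]
  have hT : (Rhalf * F * Fᴴ * Rhalf).PosSemidef := by
    simpa only [hassoc, hRhalf.isHermitian.eq] using
      (posSemidef_self_mul_conjTranspose F).mul_mul_conjTranspose_same Rhalf
  have hrankFF : (Rhalf * F * Fᴴ * Rhalf).rank ≤ (F * Fᴴ).rank :=
    hassoc ▸ (rank_mul_le_left _ _).trans (rank_mul_le_right _ _)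
  have hrank : (Rhalf * F * Fᴴ * Rhalf).rank ≤ min K (F * Fᴴ).rank :=
    le_min (hrankFF.trans ((rank_mul_le_left _ _).trans (rank_le_width F))) hrankFF
  rw [ge_iff_le, Finset.mul_sum]
  exact Finset.sum_le_sum fun j _ ↦
    le_rhoBar hT hrank ((min_le_left _ _).trans hNSK) hNS1 (hl j) (hδ j)

/-- **Proposition 2 of the paper**: the closed-form sensing mutual information with random
signals is at least `((N_S − min{K, rank(FFᴴ)})/N_S)` times the deterministic-signal upper
bound `Σ_j log det(I + λ_j T)`, where `T = R_T^{1/2} F Fᴴ R_T^{1/2}`. -/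
theorem smi_lower_bound {NT K NR NS : ℕ}
    (RT Rhalf : Matrix (Fin NT) (Fin NT) ℂ)
    (hRT : RT.PosSemidef) (hRhalf : Rhalf.PosSemidef) (hsq : Rhalf * Rhalf = RT)
    (F : Matrix (Fin NT) (Fin K) ℂ)
    (l : Fin NR → ℝ) (hl : ∀ j, 0 ≤ l j)
    (hNS1 : 1 ≤ NS) (hNSK : K ≤ NS)
    (δ : Fin NR → ℝ)
    (hδ : ∀ j, 0 < l j →
      0 ≤ δ j ∧ FixedPointEq (Rhalf * F * Fᴴ * Rhalf) (l j) NS (δ j)) :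
    ∑ j : Fin NR, rhoBar (l j) (Rhalf * F * Fᴴ * Rhalf) NS (δ j) ≥
      (((NS : ℝ) - (min K (F * Fᴴ).rank : ℕ)) / (NS : ℝ)) *
        ∑ j : Fin NR,
          Real.log ((1 + ((l j : ℝ) : ℂ) • (Rhalf * F * Fᴴ * Rhalf)).det.re) :=
  smi_lower_bound_general Rhalf hRhalf F l hl hNS1 hNSK δ hδ
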